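/- arXiv:1206.3638 — 3 statements merged into one kernel-verified Lean document; each statement's English description precedes it below -/
import Mathlib

section
/- Let θ_b, θ_c ∈ ℝ and let Λ_b, Λ_c be the corresponding 2×2 quadrature transformation matrices Λ = (1/√2)·[[e^{iθ}, e^{-iθ}],[-i e^{iθ}, i e^{-iθ}]]. With Ψ = diag(1,-1) and J = [[0,1],[-1,0]], one has (Λ_b Ψ Λ_c†) J (Λ_c Ψ Λ_b†) = J. -/
open Matrix

noncomputable def Lam (θ : ℝ) : Matrix (Fin 2) (Fin 2) ℂ :=
  ((Real.sqrt 2 : ℂ))⁻¹ •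
    !![Complex.exp (θ * Complex.I), Complex.exp (-θ * Complex.I);
       -Complex.I * Complex.exp (θ * Complex.I), Complex.I * Complex.exp (-θ * Complex.I)]

theorem Lam_psi_J_identity (θb θc : ℝ) :
    (Lam θb * !![1, 0; 0, -1] * (Lam θc)ᴴ) * !![0, 1; -1, 0] *
      (Lam θc * !![1, 0; 0, -1] * (Lam θb)ᴴ) = !![0, 1; -1, 0] := by
  have hH : ∀ θ : ℝ, (Lam θ)ᴴ = ((Real.sqrt 2 : ℂ))⁻¹ •
      !![Complex.exp (-θ * Complex.I), Complex.I * Complex.exp (-θ * Complex.I);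
         Complex.exp (θ * Complex.I), -Complex.I * Complex.exp (θ * Complex.I)] := by
    intro θ
    ext i j
    fin_cases i <;> fin_cases j <;>
      simp [Lam, conjTranspose_apply, ← Complex.exp_conj, Complex.conj_I,
        Complex.conj_ofReal] <;> ring_nf <;>
      rw [← Complex.exp_conj] <;> simp [Complex.conj_ofReal] <;> ring
  have hs : ((Real.sqrt 2 : ℂ))⁻¹ * ((Real.sqrt 2 : ℂ))⁻¹ = 2⁻¹ := by
    have h : ((Real.sqrt 2 : ℂ)) * ((Real.sqrt 2 : ℂ)) = 2 := by
      norm_cast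
      rw [Real.mul_self_sqrt] <;> norm_num
    rw [← mul_inv, h]
  have hB : Complex.exp ((θb : ℂ) * Complex.I) * Complex.exp (-((θb : ℂ) * Complex.I)) = 1 := by
    rw [← Complex.exp_add]; simp
  have hC : Complex.exp ((θc : ℂ) * Complex.I) * Complex.exp (-((θc : ℂ) * Complex.I)) = 1 := by
    rw [← Complex.exp_add]; simp
  have hI : Complex.I ^ 2 = -1 := Complex.I_sq
  set r : ℂ := ((Real.sqrt 2 : ℂ))⁻¹ with hr
  set B : ℂ := Complex.exp ((θb : ℂ) * Complex.I) with hBd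
  set B' : ℂ := Complex.exp (-((θb : ℂ) * Complex.I)) with hB'd
  set C : ℂ := Complex.exp ((θc : ℂ) * Complex.I) with hCd
  set C' : ℂ := Complex.exp (-((θc : ℂ) * Complex.I)) with hC'd
  rw [hH θb, hH θc]
  show (Lam θb * _ * _) * _ * _ = _
  rw [Lam, Lam]
  ext i j
  fin_cases i <;> fin_cases j <;>
    simp [Matrix.mul_apply, Fin.sum_univ_succ, ← hBd, ← hB'd, ← hCd, ← hC'd, ← hr]
  · ring
  · linear_combination (-4*(B*C')*(B'*C)*r^4) * hI + (4*(B*C')*(B'*C)*(r*r+2⁻¹)) * hs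
      + (C*C') * hB + hC
  · linear_combination (4*(B*C')*(B'*C)*r^4) * hI + (-4*(B*C')*(B'*C)*(r*r+2⁻¹)) * hs
      + (-(C*C')) * hB + (-1 : ℂ) * hC
  · ring
end

section
/- Let Ψ_n = diag(I_n, -I_n), let C be a 2m×2n complex matrix, let Ω₋, Ω₊ be n×n complex matrices with Ω₋† = Ω₋ and Ω₊^T = Ω₊, and set Ω = [[Ω₋, Ω₊],[Ω₊^#, Ω₋^#]] and A = -(1/2) C^♭ C - i Ψ_n Ω. Then Ψ_n A + A† Ψ_n + C† Ψ_m C = 0. -/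
open Matrix

noncomputable def PsiB (k : ℕ) : Matrix (Fin k ⊕ Fin k) (Fin k ⊕ Fin k) ℂ :=
  fromBlocks 1 0 0 (-1)

lemma PsiB_sq (k : ℕ) : PsiB k * PsiB k = 1 := by
  simp [PsiB, fromBlocks_multiply, fromBlocks_one]

lemma PsiB_sq_mul (k : ℕ) (X : Matrix (Fin k ⊕ Fin k) (Fin k ⊕ Fin k) ℂ) :
    PsiB k * (PsiB k * X) = X := by
  rw [← Matrix.mul_assoc, PsiB_sq, Matrix.one_mul]

lemma PsiB_ct (k : ℕ) : (PsiB k)ᴴ = PsiB k := by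
  simp [PsiB, fromBlocks_conjTranspose]

theorem phys_realizability_annihilation_creation (n m : ℕ)
    (C : Matrix (Fin m ⊕ Fin m) (Fin n ⊕ Fin n) ℂ)
    (Ωm Ωp : Matrix (Fin n) (Fin n) ℂ) (hΩm : Ωmᴴ = Ωm) (hΩp : Ωpᵀ = Ωp)
    (Ω : Matrix (Fin n ⊕ Fin n) (Fin n ⊕ Fin n) ℂ)
    (hΩ : Ω = fromBlocks Ωm Ωp (Ωp.map star) (Ωm.map star))
    (A : Matrix (Fin n ⊕ Fin n) (Fin n ⊕ Fin n) ℂ)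
    (hA : A = -(1/2 : ℂ) • (PsiB n * Cᴴ * PsiB m * C) - Complex.I • (PsiB n * Ω)) :
    PsiB n * A + Aᴴ * PsiB n + Cᴴ * PsiB m * C = 0 := by
  have hΩh : Ωᴴ = Ω := by
    subst hΩ
    have h1 : (Ωp.map star)ᴴ = Ωp := by
      ext i j; simp [conjTranspose_apply]
      exact congrFun (congrFun hΩp i) j
    have h2 : Ωpᴴ = Ωp.map star := by
      ext i j; simp [conjTranspose_apply]
      exact congrArg star (congrFun (congrFun hΩp i) j)
    have h3 : (Ωm.map star)ᴴ = Ωm.map star := by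
      ext i j; simp [conjTranspose_apply]
      have := congrFun (congrFun hΩm i) j
      simp [conjTranspose_apply] at this
      rw [← this]; simp
    rw [fromBlocks_conjTranspose, hΩm, h1, h2, h3]
  have hAH : Aᴴ = -(1/2 : ℂ) • (Cᴴ * PsiB m * C * PsiB n) + Complex.I • (Ω * PsiB n) := by
    rw [hA]
    simp only [conjTranspose_sub, conjTranspose_smul, conjTranspose_mul, PsiB_ct,
      conjTranspose_conjTranspose, hΩh, Complex.star_def, map_neg, map_div₀,
      Complex.conj_I, _root_.map_one]
    simp [neg_smul, Matrix.mul_assoc, Complex.conj_ofNat]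
  rw [hAH, hA]
  simp only [Matrix.mul_sub, Matrix.mul_add, Matrix.add_mul, Matrix.sub_mul,
    Matrix.mul_smul, Matrix.smul_mul, Matrix.mul_assoc, PsiB_sq_mul, PsiB_sq,
    Matrix.mul_one]
  module
end

section
/- Let Ã, C̃ be real matrices of sizes 2n×2n and 2m×2n with J_n Ã + Ã^T J_n + C̃^T J_m C̃ = 0, where J_k = [[0, I_k],[-I_k, 0]]. Then there exists a real symmetric 2n×2n matrix R such that Ã = (1/2) J_n C̃^T J_m C̃ + J_n R, and conversely for every real symmetric R this formula yields a matrix Ã satisfying the identity. -/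
open Matrix

noncomputable def JJ (k : ℕ) : Matrix (Fin k ⊕ Fin k) (Fin k ⊕ Fin k) ℝ :=
  fromBlocks 0 1 (-1) 0

lemma JJ_transpose (k : ℕ) : (JJ k)ᵀ = -(JJ k) := by
  simp only [JJ, fromBlocks_transpose, Matrix.fromBlocks_neg]
  simp

lemma JJ_mul (k : ℕ) : JJ k * JJ k = -1 := by
  simp only [JJ, fromBlocks_multiply, Matrix.fromBlocks_neg, ← Matrix.fromBlocks_one]
  simp [Matrix.fromBlocks_neg]

lemma JJ_mul_cancel {k : ℕ} {p : Type*} [Fintype p]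
    (X : Matrix (Fin k ⊕ Fin k) p ℝ) : JJ k * (JJ k * X) = -X := by
  rw [← Matrix.mul_assoc, JJ_mul]; simp

theorem A_parametrization (n m : ℕ)
    (A : Matrix (Fin n ⊕ Fin n) (Fin n ⊕ Fin n) ℝ)
    (C : Matrix (Fin m ⊕ Fin m) (Fin n ⊕ Fin n) ℝ)
    (hA : JJ n * A + Aᵀ * JJ n + Cᵀ * JJ m * C = 0) :
    (∃ R : Matrix (Fin n ⊕ Fin n) (Fin n ⊕ Fin n) ℝ, R.IsSymm ∧
        A = (1/2 : ℝ) • (JJ n * Cᵀ * JJ m * C) + JJ n * R) ∧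
    (∀ R : Matrix (Fin n ⊕ Fin n) (Fin n ⊕ Fin n) ℝ, R.IsSymm →
        JJ n * ((1/2 : ℝ) • (JJ n * Cᵀ * JJ m * C) + JJ n * R) +
          ((1/2 : ℝ) • (JJ n * Cᵀ * JJ m * C) + JJ n * R)ᵀ * JJ n +
          Cᵀ * JJ m * C = 0) := by
  have hA' : Aᵀ * JJ n = -(JJ n * A) - Cᵀ * (JJ m * C) := by
    have h : Aᵀ * JJ n - (-(JJ n * A) - Cᵀ * (JJ m * C)) = 0 := by
      rw [← hA, Matrix.mul_assoc Cᵀ]; abel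
    exact sub_eq_zero.mp h
  constructor
  · refine ⟨-(JJ n * A) - (1/2 : ℝ) • (Cᵀ * JJ m * C), ?_, ?_⟩
    · unfold Matrix.IsSymm
      simp only [transpose_sub, transpose_neg, transpose_smul, transpose_mul,
        transpose_transpose, JJ_transpose, Matrix.mul_neg, Matrix.neg_mul,
        neg_neg, Matrix.mul_assoc, hA']
      module
    · simp only [Matrix.mul_sub, Matrix.mul_neg, Matrix.mul_smul,
        Matrix.mul_assoc, JJ_mul_cancel, neg_neg]
      module
  · intro R hR
    have hRT : Rᵀ = R := hR
    simp only [Matrix.mul_add, transpose_add, Matrix.add_mul, Matrix.mul_smul,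
      transpose_smul, Matrix.smul_mul, transpose_mul, transpose_transpose,
      JJ_transpose, hRT, Matrix.mul_neg, Matrix.neg_mul, Matrix.mul_assoc,
      JJ_mul_cancel, JJ_mul, Matrix.mul_one, neg_neg]
    module
end
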